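/- arXiv:1904.04107 — 7 statements merged into one kernel-verified Lean document; each statement's English description precedes it below -/
import Mathlib

section
/- A T0 topological space X is T1 if and only if X has a closed network, i.e., a collection 𝒩 of closed subsets of X such that for every point x and every open set U containing x there exists N ∈ 𝒩 with x ∈ N ⊆ U. -/
/-!
A closed network forces specialization to be symmetric: if `x ⤳ y` and `U` is an open
neighbourhood of `x`, a closed member `N` of the network with `x ∈ N ⊆ U` also contains `y`.
So the space is R₀, and an R₀ space that is T₀ is T₁. Conversely, in a T₁ space the singletons
form a closed network.
-/

open Set

section

variable {X : Type*} [TopologicalSpace X]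

def IsNetwork (𝒩 : Set (Set X)) : Prop :=
  ∀ (x : X) (U : Set X), IsOpen U → x ∈ U → ∃ N ∈ 𝒩, x ∈ N ∧ N ⊆ U

theorem isNetwork_range_singleton : IsNetwork (range fun x : X => ({x} : Set X)) :=
  fun x _ _ hx => ⟨{x}, mem_range_self x, mem_singleton x, singleton_subset_iff.mpr hx⟩

theorem IsNetwork.r0Space {𝒩 : Set (Set X)} (h𝒩 : IsNetwork 𝒩) (hcl : ∀ N ∈ 𝒩, IsClosed N) :
    R0Space X where
  specializes_symm := ⟨fun x y hxy => specializes_iff_forall_open.mpr fun U hU hxU => by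
    obtain ⟨N, hN, hxN, hNU⟩ := h𝒩 x U hU hxU
    exact hNU (hxy.mem_closed (hcl N hN) hxN)⟩

end

/-- A T0 space is T1 iff it has a closed network. -/
theorem t1_iff_exists_closed_network {X : Type*} [TopologicalSpace X] [T0Space X] :
    T1Space X ↔
      ∃ 𝒩 : Set (Set X), (∀ N ∈ 𝒩, IsClosed N) ∧
        ∀ (x : X) (U : Set X), IsOpen U → x ∈ U → ∃ N ∈ 𝒩, x ∈ N ∧ N ⊆ U := by
  constructor
  · intro _
    refine ⟨_, ?_, isNetwork_range_singleton⟩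
    rintro _ ⟨x, rfl⟩
    exact isClosed_singleton
  · rintro ⟨𝒩, hcl, h𝒩⟩
    have : R0Space X := IsNetwork.r0Space h𝒩 hcl
    infer_instance
end

section
/- Every T0 topological space in which every closed set is a G_δ set is T1. -/
open Set

theorem IsGδ.mem_of_specializes {X : Type*} [TopologicalSpace X] {s : Set X} {x y : X}
    (hs : IsGδ s) (hxy : x ⤳ y) (hy : y ∈ s) : x ∈ s := by
  obtain ⟨T, hT, -, rfl⟩ := hs
  exact mem_sInter.2 fun U hU => hxy.mem_open (hT U hU) (mem_sInter.1 hy U hU)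

/-- Every T0 space in which every closed set is `G_δ` is T1. -/
theorem t1Space_of_t0_of_closed_isGδ {X : Type*} [TopologicalSpace X] [T0Space X]
    (h : ∀ C : Set X, IsClosed C → IsGδ C) : T1Space X := by
  refine t1Space_iff_specializes_imp_eq.2 fun x y hxy => ?_
  have hyx : y ⤳ x := specializes_iff_mem_closure.2 <|
    (h _ isClosed_closure).mem_of_specializes hxy (subset_closure rfl)
  exact (hxy.antisymm hyx).eq
end

section
/- Let X be a T2.5 (Urysohn) space, let x, y ∈ X, and let ℳ be a family of subsets of X that is simultaneously a network at x and a network at y, and such that for all M, N ∈ ℳ the closures cl(M) and cl(N) intersect. Then x = y. -/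
/-- In a T2.5 (Urysohn) space, if `ℳ` is a network at both `x` and `y` and the closures of any
two members of `ℳ` intersect, then `x = y`. -/
theorem eq_of_common_network_t25 {X : Type*} [TopologicalSpace X] [T25Space X]
    (x y : X) (ℳ : Set (Set X))
    (hx : ∀ U : Set X, IsOpen U → x ∈ U → ∃ M ∈ ℳ, x ∈ M ∧ M ⊆ U)
    (hy : ∀ U : Set X, IsOpen U → y ∈ U → ∃ M ∈ ℳ, y ∈ M ∧ M ⊆ U)
    (hmeet : ∀ M ∈ ℳ, ∀ N ∈ ℳ, (closure M ∩ closure N).Nonempty) :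
    x = y := by
  by_contra hxy
  obtain ⟨U, hxU, hU, V, hyV, hV, hUV⟩ := exists_open_nhds_disjoint_closure hxy
  obtain ⟨M, hM, -, hMU⟩ := hx U hU hxU
  obtain ⟨N, hN, -, hNV⟩ := hy V hV hyV
  obtain ⟨z, hzM, hzN⟩ := hmeet M hM N hN
  exact hUV.ne_of_mem (closure_mono hMU hzM) (closure_mono hNV hzN) rfl
end

section
/- In the Golomb topology on the positive integers (the relatively prime integer topology), for all positive integers a, b with gcd(a,b) = 1, every positive multiple of b lies in the closure of the arithmetic progression {a + b·n : n ∈ ℤ} ∩ ℤ⁺. That is, b·ℤ⁺ ⊆ cl({a + b·n : n ∈ ℤ, a + b·n > 0}). -/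
/-!
A basic neighbourhood `x + cℤ` of `x` has `gcd(x, c) = 1`, and every neighbourhood of `x` in the
Golomb topology contains one (the basic sets are closed under re-centring and intersection). If
`b ∣ x` then also `gcd(b, c) = 1`, so by the Chinese remainder theorem `x + cℤ` meets `a + bℤ`.
-/

/-- The subbasis (indeed basis) of the Golomb (relatively prime integer) topology on `ℕ+`:
arithmetic progressions `(a + bℤ) ∩ ℤ⁺` with `gcd(a,b) = 1`. -/
def golombSubbasis : Set (Set ℕ+) :=
  {S | ∃ a b : ℕ+, Nat.Coprime (a : ℕ) (b : ℕ) ∧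
    S = {x : ℕ+ | ((b : ℕ) : ℤ) ∣ (((x : ℕ) : ℤ) - ((a : ℕ) : ℤ))}}

/-- The Golomb topology on the positive integers. -/
def golombTopology : TopologicalSpace ℕ+ :=
  TopologicalSpace.generateFrom golombSubbasis

namespace Golomb

open Topology

def progression (a b : ℕ) : Set ℕ+ := {y | (y : ℕ) ≡ a [MOD b]}

lemma setOf_intCast_dvd_sub_eq_progression (a b : ℕ) :
    {y : ℕ+ | (b : ℤ) ∣ ((y : ℕ) : ℤ) - a} = progression a b := by
  ext y
  exact Nat.modEq_iff_dvd.symm.trans Nat.ModEq.comm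

lemma progression_eq_of_mem {a b : ℕ} {x : ℕ+} (hx : x ∈ progression a b) :
    progression x b = progression a b := by
  ext y
  exact ⟨fun hy => Nat.ModEq.trans hy hx, fun hy => Nat.ModEq.trans hy hx.symm⟩

lemma coprime_of_mem_progression {a b : ℕ} {x : ℕ+} (hab : Nat.Coprime a b)
    (hx : x ∈ progression a b) : Nat.Coprime x b :=
  (Nat.ModEq.gcd_eq hx).trans hab

lemma progression_subset_of_dvd (a : ℕ) {b c : ℕ} (h : b ∣ c) :
    progression a c ⊆ progression a b :=
  fun _ hy => Nat.ModEq.of_dvd h hy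

lemma exists_coprime_progression_subset_of_isOpen {U : Set ℕ+}
    (hU : IsOpen[golombTopology] U) {x : ℕ+} (hxU : x ∈ U) :
    ∃ c : ℕ+, Nat.Coprime x c ∧ progression x c ⊆ U := by
  induction hU with
  | basic S hS =>
    obtain ⟨a, c, hac, rfl⟩ := hS
    rw [setOf_intCast_dvd_sub_eq_progression] at hxU ⊢
    exact ⟨c, coprime_of_mem_progression hac hxU, (progression_eq_of_mem hxU).le⟩
  | univ => exact ⟨1, Nat.coprime_one_right _, Set.subset_univ _⟩
  | inter S T _ _ ihS ihT =>
    obtain ⟨c₁, hc₁, hS⟩ := ihS hxU.1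
    obtain ⟨c₂, hc₂, hT⟩ := ihT hxU.2
    refine ⟨c₁ * c₂, Nat.Coprime.mul_right hc₁ hc₂, Set.subset_inter ?_ ?_⟩
    · exact (progression_subset_of_dvd x (dvd_mul_right _ _)).trans hS
    · exact (progression_subset_of_dvd x (dvd_mul_left _ _)).trans hT
  | sUnion 𝒮 _ ih =>
    obtain ⟨S, hS𝒮, hxS⟩ := hxU
    obtain ⟨c, hxc, hS⟩ := ih S hS𝒮 hxS
    exact ⟨c, hxc, hS.trans (Set.subset_sUnion_of_mem hS𝒮)⟩

lemma progression_inter_nonempty (a x : ℕ) {b c : ℕ} (hb : 0 < b) (hc : 0 < c)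
    (hbc : Nat.Coprime b c) : (progression a b ∩ progression x c).Nonempty := by
  obtain ⟨k, hka, hkx⟩ := Nat.chineseRemainder hbc a x
  -- The CRT solution may be `0`; adding `b * c` makes it positive.
  refine ⟨⟨k + b * c, by positivity⟩, ?_, ?_⟩
  · exact (Nat.add_mul_mod_self_left k b c).trans hka
  · exact (Nat.add_mul_mod_self_right k b c).trans hkx

end Golomb

theorem golomb_multiple_mem_closure_progression_general (a b : ℕ+)
    (x : ℕ+) (hx : (b : ℕ) ∣ (x : ℕ)) :
    x ∈ @closure ℕ+ golombTopology
      {y : ℕ+ | ((b : ℕ) : ℤ) ∣ (((y : ℕ) : ℤ) - ((a : ℕ) : ℤ))} := by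
  let := golombTopology
  rw [Golomb.setOf_intCast_dvd_sub_eq_progression, mem_closure_iff]
  intro U hU hxU
  obtain ⟨c, hxc, hcU⟩ := Golomb.exists_coprime_progression_subset_of_isOpen hU hxU
  obtain ⟨y, hya, hyx⟩ :=
    Golomb.progression_inter_nonempty a x b.pos c.pos (hxc.coprime_dvd_left hx)
  exact ⟨y, hcU hyx, hya⟩

/-- In the Golomb topology, every positive multiple of `b` lies in the closure of the
arithmetic progression `(a + bℤ) ∩ ℤ⁺`, when `gcd(a,b) = 1`. -/
theorem golomb_multiple_mem_closure_progression (a b : ℕ+)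
    (hab : Nat.Coprime (a : ℕ) (b : ℕ)) (x : ℕ+) (hx : (b : ℕ) ∣ (x : ℕ)) :
    x ∈ @closure ℕ+ golombTopology
      {y : ℕ+ | ((b : ℕ) : ℤ) ∣ (((y : ℕ) : ℤ) - ((a : ℕ) : ℤ))} :=
  golomb_multiple_mem_closure_progression_general a b x hx
end

section
/- The Golomb space is nowhere T2.5: for any two nonempty open sets U and V in the relatively prime integer topology on the positive integers, cl(U) ∩ cl(V) ≠ ∅. In particular, the Golomb space is not a T2.5 (Urysohn) space. -/
/-- `(a + bℤ) ∩ ℤ⁺`, spelled as in `golombSubbasis` so that its members unfold to it. -/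
def golombBasic (a b : ℕ+) : Set ℕ+ :=
  {x : ℕ+ | ((b : ℕ) : ℤ) ∣ (((x : ℕ) : ℤ) - ((a : ℕ) : ℤ))}

lemma mem_golombBasic {a b x : ℕ+} : x ∈ golombBasic a b ↔ (a : ℕ) ≡ x [MOD b] :=
  Nat.modEq_iff_dvd.symm

lemma golombBasic_mem_golombSubbasis {a b : ℕ+} (hab : Nat.Coprime a b) :
    golombBasic a b ∈ golombSubbasis :=
  ⟨a, b, hab, rfl⟩

lemma coprime_of_mem_golombBasic {a b x : ℕ+} (hab : Nat.Coprime a b)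
    (hx : x ∈ golombBasic a b) : Nat.Coprime x b := by
  rw [Nat.Coprime, ← (mem_golombBasic.1 hx).gcd_eq]
  exact hab

lemma Nat.exists_pos_modEq_and_modEq {n m : ℕ} (hn : 0 < n) (hm : 0 < m) (co : n.Coprime m)
    (a b : ℕ) : ∃ k, 0 < k ∧ k ≡ a [MOD n] ∧ k ≡ b [MOD m] := by
  obtain ⟨k, hka, hkb⟩ := Nat.chineseRemainder co a b
  refine ⟨k + n * m, by positivity, ?_, ?_⟩
  · exact Nat.ModEq.trans (by simp [Nat.ModEq]) hka
  · exact Nat.ModEq.trans (by simp [Nat.ModEq]) hkb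

section

attribute [local instance] golombTopology

lemma isTopologicalBasis_golombSubbasis :
    TopologicalSpace.IsTopologicalBasis golombSubbasis := by
  refine ⟨?_, ?_, rfl⟩
  · rintro _ ⟨a, b, hab, rfl⟩ _ ⟨c, d, hcd, rfl⟩ x ⟨hxb, hxd⟩
    have hx : Nat.Coprime x (b * d) :=
      (coprime_of_mem_golombBasic hab hxb).mul_right (coprime_of_mem_golombBasic hcd hxd)
    refine ⟨golombBasic x (b * d), golombBasic_mem_golombSubbasis hx,
      mem_golombBasic.2 rfl, fun y hy => ?_⟩
    have hy : (x : ℕ) ≡ y [MOD b * d] := by simpa using mem_golombBasic.1 hy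
    exact ⟨mem_golombBasic.2 ((mem_golombBasic.1 hxb).trans (hy.of_mul_right d)),
      mem_golombBasic.2 ((mem_golombBasic.1 hxd).trans (hy.of_mul_left b))⟩
  · refine Set.eq_univ_of_forall fun x => Set.mem_sUnion.2
      ⟨golombBasic x 1, golombBasic_mem_golombSubbasis (by simp), mem_golombBasic.2 rfl⟩

lemma mem_closure_golombBasic_of_dvd {a b p : ℕ+} (hp : (b : ℕ) ∣ p) :
    p ∈ closure (golombBasic a b) := by
  rw [isTopologicalBasis_golombSubbasis.mem_closure_iff]
  rintro _ ⟨e, f, hef, rfl⟩ hpf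
  have hbf : Nat.Coprime b f := (coprime_of_mem_golombBasic hef hpf).coprime_dvd_left hp
  obtain ⟨k, hk, hka, hke⟩ := Nat.exists_pos_modEq_and_modEq b.pos f.pos hbf a e
  exact ⟨⟨k, hk⟩, mem_golombBasic.2 hke.symm, mem_golombBasic.2 hka.symm⟩

lemma golomb_closure_inter_closure_nonempty {U V : Set ℕ+} (hU : IsOpen U) (hV : IsOpen V)
    (hU₀ : U.Nonempty) (hV₀ : V.Nonempty) : (closure U ∩ closure V).Nonempty := by
  obtain ⟨x, hx⟩ := hU₀
  obtain ⟨z, hz⟩ := hV₀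
  obtain ⟨_, ⟨a, b, -, rfl⟩, -, hbU⟩ :=
    isTopologicalBasis_golombSubbasis.exists_subset_of_mem_open hx hU
  obtain ⟨_, ⟨c, d, -, rfl⟩, -, hdV⟩ :=
    isTopologicalBasis_golombSubbasis.exists_subset_of_mem_open hz hV
  exact ⟨b * d, closure_mono hbU (mem_closure_golombBasic_of_dvd (by simp)),
    closure_mono hdV (mem_closure_golombBasic_of_dvd (by simp))⟩

end

lemma not_t25Space_of_closure_inter_closure_nonempty {X : Type*} [TopologicalSpace X]
    [Nontrivial X] (h : ∀ U V : Set X, IsOpen U → IsOpen V → U.Nonempty → V.Nonempty →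
      (closure U ∩ closure V).Nonempty) :
    ¬ T25Space X := by
  intro _
  obtain ⟨x, y, hxy⟩ := exists_pair_ne X
  obtain ⟨u, hxu, hu, v, hyv, hv, huv⟩ := exists_open_nhds_disjoint_closure hxy
  exact Set.not_disjoint_iff_nonempty_inter.2 (h u v hu hv ⟨x, hxu⟩ ⟨y, hyv⟩) huv

/-- The Golomb space is nowhere T2.5: any two nonempty open sets have intersecting closures.
In particular it is not a T2.5 (Urysohn) space. -/
theorem golomb_nowhere_t25 :
    (∀ U V : Set ℕ+, @IsOpen ℕ+ golombTopology U → @IsOpen ℕ+ golombTopology V →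
      U.Nonempty → V.Nonempty →
      (@closure ℕ+ golombTopology U ∩ @closure ℕ+ golombTopology V).Nonempty) ∧
    ¬ @T25Space ℕ+ golombTopology := by
  let := golombTopology
  have h : ∀ U V : Set ℕ+, IsOpen U → IsOpen V → U.Nonempty → V.Nonempty →
      (closure U ∩ closure V).Nonempty :=
    fun _ _ => golomb_closure_inter_closure_nonempty
  exact ⟨h, not_t25Space_of_closure_inter_closure_nonempty h⟩
end

section
/- Let τ' be the topology on ℝ generated by the standard Euclidean topology together with the single additional open set J = ℝ ∖ ℚ (the irrationals). Then ℚ is a closed set in (ℝ, τ') that is not a G_δ set in (ℝ, τ'). Consequently, (ℝ, τ') is a second-countable, submetrizable space that is not a G_δ-space. -/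
open TopologicalSpace Set Topology

/-!
Let `τ'` be the extension of a topology `τ` by a set `D`. Every `τ'`-open set `W` satisfies
`W \ D ⊆ int_τ W`. So if a dense set `S` disjoint from `D` is a countable intersection of `τ'`-open
sets `W`, each `int_τ W` is a dense `τ`-open set containing `S`, and `S` is `τ`-residual.
For `D = ℝ \ ℚ` this is impossible: the irrationals are residual, and `ℚ` is disjoint from them.
-/

/-- The indiscrete irrational extension of `ℝ`: the topology generated by the Euclidean
topology together with the set of irrationals as a new open set. -/
def irrExtTopology : TopologicalSpace ℝ :=
  TopologicalSpace.generateFrom (insert {x : ℝ | Irrational x} {U : Set ℝ | IsOpen U})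

def extensionTopology {X : Type*} (t : TopologicalSpace X) (D : Set X) : TopologicalSpace X :=
  generateFrom (insert D {U | IsOpen[t] U})

section extensionTopology

variable {X : Type*} [t : TopologicalSpace X]

theorem extensionTopology_eq_generateFrom_inf (D : Set X) :
    extensionTopology t D = generateFrom {D} ⊓ t := by
  rw [extensionTopology, insert_eq, generateFrom_union, generateFrom_setOfPred_isOpen]

theorem extensionTopology_le (D : Set X) : extensionTopology t D ≤ t :=
  fun _ hU ↦ .basic _ (.inr hU)

theorem isClosed_extensionTopology_compl (C : Set X) : IsClosed[extensionTopology t Cᶜ] C :=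
  @IsClosed.mk X (extensionTopology t Cᶜ) C (.basic _ (.inl rfl))

theorem secondCountableTopology_extensionTopology [SecondCountableTopology X] (D : Set X) :
    @SecondCountableTopology X (extensionTopology t D) := by
  rw [extensionTopology_eq_generateFrom_inf, eq_generateFrom_countableBasis X,
    ← generateFrom_union]
  exact .mk' (countable_singleton D |>.union (countable_countableBasis X))

theorem IsOpen.sdiff_subset_interior_of_extensionTopology {D W : Set X}
    (hW : IsOpen[extensionTopology t D] W) : W \ D ⊆ interior W := by
  induction hW with
  | basic s hs =>
    rcases hs with rfl | hs
    · simp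
    · exact sdiff_subset.trans (hs : IsOpen s).interior_eq.ge
  | univ => simp
  | inter s u _ _ ihs ihu =>
    rw [interior_inter]
    exact fun x ⟨⟨hxs, hxu⟩, hxD⟩ ↦ ⟨ihs ⟨hxs, hxD⟩, ihu ⟨hxu, hxD⟩⟩
  | sUnion S _ ih =>
    rintro x ⟨⟨s, hsS, hxs⟩, hxD⟩
    exact interior_mono (subset_sUnion_of_mem hsS) (ih s hsS ⟨hxs, hxD⟩)

theorem IsGδ.mem_residual_of_extensionTopology {D S : Set X}
    (hS : @IsGδ X (extensionTopology t D) S) (hSD : Disjoint S D) (hSdense : Dense S) :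
    S ∈ residual X := by
  obtain ⟨T, hTopen, hTcount, rfl⟩ := hS
  rw [countable_sInter_mem hTcount]
  intro W hW
  have hSint : ⋂₀ T ⊆ interior W := fun x hx ↦
    (hTopen W hW).sdiff_subset_interior_of_extensionTopology
      ⟨hx W hW, hSD.notMem_of_mem_left hx⟩
  exact Filter.mem_of_superset (residual_of_dense_open isOpen_interior (hSdense.mono hSint))
    interior_subset

end extensionTopology

theorem range_ratCast_notMem_residual : range ((↑) : ℚ → ℝ) ∉ residual ℝ := fun h ↦ by
  obtain ⟨_, ⟨q, rfl⟩, hq⟩ :=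
    (dense_of_mem_residual (Filter.inter_mem h eventually_residual_irrational)).nonempty
  exact hq ⟨q, rfl⟩

/-- In the indiscrete irrational extension of `ℝ`, the rationals form a closed set which is not
`G_δ`; the space is second-countable and submetrizable but not a `G_δ`-space. -/
theorem irrExt_not_gdeltaSpace :
    @IsClosed ℝ irrExtTopology (Set.range ((↑) : ℚ → ℝ)) ∧
    ¬ @IsGδ ℝ irrExtTopology (Set.range ((↑) : ℚ → ℝ)) ∧
    @SecondCountableTopology ℝ irrExtTopology ∧
    (∃ m : TopologicalSpace ℝ, @TopologicalSpace.MetrizableSpace ℝ m ∧ irrExtTopology ≤ m) ∧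
    ¬ (∀ C : Set ℝ, @IsClosed ℝ irrExtTopology C → @IsGδ ℝ irrExtTopology C) := by
  have hext : irrExtTopology = extensionTopology inferInstance (range ((↑) : ℚ → ℝ))ᶜ := rfl
  have hclosed : IsClosed[irrExtTopology] (range ((↑) : ℚ → ℝ)) :=
    hext ▸ isClosed_extensionTopology_compl _
  have hnotGδ : ¬ @IsGδ ℝ irrExtTopology (range ((↑) : ℚ → ℝ)) := fun h ↦
    range_ratCast_notMem_residual <| (hext ▸ h).mem_residual_of_extensionTopology
      disjoint_compl_right Rat.denseRange_cast
  exact ⟨hclosed, hnotGδ, hext ▸ secondCountableTopology_extensionTopology _,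
    ⟨_, inferInstance, extensionTopology_le _⟩, fun h ↦ hnotGδ (h _ hclosed)⟩
end

section
/- Let (X, τ) be a topological space, and let D ⊆ X be a τ-dense set such that X ∖ D is τ-dense in some nonempty τ-open set T (i.e., T ⊆ cl_τ(T ∖ D)). Let τ' be the topology generated by τ ∪ {D}. Then (X, τ') is not a regular space: there exists a point x ∈ D ∩ T and a τ'-closed set C = X ∖ D not containing x such that x and C cannot be separated by disjoint τ'-open sets. -/
def extTop {X : Type*} (τ : TopologicalSpace X) (D : Set X) : TopologicalSpace X :=
  TopologicalSpace.generateFrom (insert D {U : Set X | @IsOpen X τ U})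

/-!
Every `τ'`-neighbourhood of a point `y` contains `V₀ ∩ D` for some `τ`-neighbourhood `V₀` of `y`.
Since `D` is `τ`-dense, two `τ'`-open sets around `x ∈ D ∩ T` and around `X ∖ D` therefore have
`τ`-neighbourhoods whose traces on `D` meet as soon as these neighbourhoods meet. They do meet:
the neighbourhood of `x` reaches `T ∖ D` because `x ∈ cl_τ(T ∖ D)`.
-/

open Topology

namespace extTop

variable {X : Type*} [τ : TopologicalSpace X] {D : Set X}

theorem isClosed_compl : IsClosed[extTop τ D] Dᶜ :=
  (@isClosed_compl_iff X (extTop τ D) D).mpr (.basic D (Set.mem_insert _ _))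

theorem exists_isOpen_inter_subset {W : Set X} (hW : IsOpen[extTop τ D] W) {y : X}
    (hy : y ∈ W) : ∃ V, IsOpen V ∧ y ∈ V ∧ V ∩ D ⊆ W := by
  induction hW generalizing y with
  | basic s hs =>
    rcases hs with rfl | hs
    · exact ⟨Set.univ, isOpen_univ, trivial, Set.inter_subset_right⟩
    · exact ⟨s, hs, hy, Set.inter_subset_left⟩
  | univ => exact ⟨Set.univ, isOpen_univ, trivial, Set.subset_univ _⟩
  | inter s t _ _ ihs iht =>
    obtain ⟨V₁, hV₁, hy₁, hV₁s⟩ := ihs hy.1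
    obtain ⟨V₂, hV₂, hy₂, hV₂t⟩ := iht hy.2
    refine ⟨V₁ ∩ V₂, hV₁.inter hV₂, ⟨hy₁, hy₂⟩, fun z hz => ⟨?_, ?_⟩⟩
    exacts [hV₁s ⟨hz.1.1, hz.2⟩, hV₂t ⟨hz.1.2, hz.2⟩]
  | sUnion S _ ih =>
    obtain ⟨s, hsS, hys⟩ := hy
    obtain ⟨V, hV, hyV, hVs⟩ := ih s hsS hys
    exact ⟨V, hV, hyV, hVs.trans (Set.subset_sUnion_of_mem hsS)⟩

theorem _root_.Dense.disjoint_of_disjoint_inter_of_isOpen_extTop (hD : Dense D) {U V : Set X}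
    (hU : IsOpen U) (hV : IsOpen[extTop τ D] V) (hUV : Disjoint (U ∩ D) V) : Disjoint U V := by
  refine Set.disjoint_left.mpr fun y hyU hyV => ?_
  obtain ⟨V₀, hV₀, hyV₀, hV₀V⟩ := exists_isOpen_inter_subset hV hyV
  obtain ⟨z, ⟨hzU, hzV₀⟩, hzD⟩ := hD.inter_open_nonempty _ (hU.inter hV₀) ⟨y, hyU, hyV₀⟩
  exact Set.disjoint_left.mp hUV ⟨hzU, hzD⟩ (hV₀V ⟨hzV₀, hzD⟩)

end extTop

/-- If `D` is `τ`-dense and its complement is `τ`-dense in some nonempty `τ`-open set `T`, then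
the extension of `τ` by `D` is not regular: some point of `D ∩ T` cannot be separated from the
closed set `X \ D` by disjoint open sets. -/
theorem extTop_not_regular {X : Type*} (τ : TopologicalSpace X) (D T : Set X)
    (hD : @Dense X τ D) (hT : @IsOpen X τ T) (hTne : T.Nonempty)
    (hcod : T ⊆ @closure X τ (T \ D)) :
    ∃ x ∈ D ∩ T,
      @IsClosed X (extTop τ D) Dᶜ ∧ x ∉ Dᶜ ∧
      ¬ ∃ U V : Set X, @IsOpen X (extTop τ D) U ∧ @IsOpen X (extTop τ D) V ∧
        x ∈ U ∧ Dᶜ ⊆ V ∧ Disjoint U V := by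
  let _ := τ
  obtain ⟨x, hxT, hxD⟩ := hD.inter_open_nonempty T hT hTne
  refine ⟨x, ⟨hxD, hxT⟩, extTop.isClosed_compl, not_not_intro hxD, ?_⟩
  rintro ⟨U, V, hU, hV, hxU, hDV, hUV⟩
  obtain ⟨U₀, hU₀, hxU₀, hU₀U⟩ := extTop.exists_isOpen_inter_subset hU hxU
  have hU₀V : Disjoint U₀ V :=
    hD.disjoint_of_disjoint_inter_of_isOpen_extTop hU₀ hV (hUV.mono_left hU₀U)
  obtain ⟨y, ⟨hyU₀, -⟩, -, hyD⟩ :=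
    mem_closure_iff.mp (hcod hxT) (U₀ ∩ T) (hU₀.inter hT) ⟨hxU₀, hxT⟩
  exact Set.disjoint_left.mp hU₀V hyU₀ (hDV hyD)
end
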